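/- Let (A,V,χ,F,ν) be a crossed product system with preunit, assume F is a cocycle satisfying the twisted module condition, and let R be a k-subalgebra of A such that F(V⊗V) ⊆ R⊗V. Then γ(V)γ(V) ⊆ (R⊗V) ∩ E ⊆ j_ν(R)γ(V), where R⊗V denotes the image of R⊗_k V in A⊗_k V, E := A×V, γ(V)γ(V) is the k-span of {μ_E(γ(v)⊗γ(w)) : v,w ∈ V}, and j_ν(R)γ(V) is the k-span of {μ_E(j_ν(r)⊗γ(v)) : r ∈ R, v ∈ V}. -/
import Mathlib


open TensorProduct

noncomputable section

namespace WeakCrossedProduct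

variable {k : Type*} [Field k]
variable {A : Type*} [Ring A] [Algebra k A]
variable {V : Type*} [AddCommGroup V] [Module k V]

/-- The map `A ⊗ₖ (A ⊗ₖ V) → A ⊗ₖ V`, `a ⊗ x ↦ a • x`, i.e. `μ_A ⊗ id_V`. -/
def actMap : A ⊗[k] (A ⊗[k] V) →ₗ[k] A ⊗[k] V :=
  TensorProduct.lift (LinearMap.mk₂ k (fun (a : A) (x : A ⊗[k] V) => a • x)
    (fun a b x => add_smul a b x)
    (fun c a x => smul_assoc c a x)
    (fun a x y => smul_add a x y)
    (fun c a x => smul_comm a c x))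

/-- Given `g : V → A ⊗ V`, the map `A ⊗ V → A ⊗ V`, `a ⊗ u ↦ a • g u`. -/
def smulMap (g : V →ₗ[k] A ⊗[k] V) : A ⊗[k] V →ₗ[k] A ⊗[k] V :=
  TensorProduct.lift (LinearMap.mk₂ k (fun (a : A) (u : V) => a • g u)
    (fun a b u => add_smul a b (g u))
    (fun c a u => smul_assoc c a (g u))
    (fun a u u' => show a • g (u + u') = a • g u + a • g u' by
      rw [map_add, smul_add])
    (fun c a u => show a • g (c • u) = c • (a • g u) by
      rw [map_smul]; exact smul_comm a c (g u)))

/-- The right action of `a' ∈ A` on `A ⊗ V`: `(a ⊗ v) · a' := a • χ (v ⊗ a')`. -/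
def ract (χ : V ⊗[k] A →ₗ[k] A ⊗[k] V) (a' : A) : A ⊗[k] V →ₗ[k] A ⊗[k] V :=
  smulMap (χ ∘ₗ (TensorProduct.mk k V A).flip a')

/-- `(A,V,χ)` is a twisted space:
`χ ∘ (id_V ⊗ μ_A) = (μ_A ⊗ id_V) ∘ (id_A ⊗ χ) ∘ (χ ⊗ id_A)` (stated on pure tensors). -/
def IsTwisting (χ : V ⊗[k] A →ₗ[k] A ⊗[k] V) : Prop :=
  ∀ (v : V) (a b : A), χ (v ⊗ₜ[k] (a * b)) = ract χ b (χ (v ⊗ₜ[k] a))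

/-- `∇_χ(x) := x · 1_A`. -/
def nabla (χ : V ⊗[k] A →ₗ[k] A ⊗[k] V) : A ⊗[k] V →ₗ[k] A ⊗[k] V :=
  ract χ 1

/-- `A × V := ∇_χ(A ⊗ V)`. -/
def AxV (χ : V ⊗[k] A →ₗ[k] A ⊗[k] V) : Submodule k (A ⊗[k] V) :=
  LinearMap.range (nabla χ)

/-- `X_χ := {x ∈ A ⊗ V : x · 1_A = 0}`. -/
def Xchi (χ : V ⊗[k] A →ₗ[k] A ⊗[k] V) : Submodule k (A ⊗[k] V) :=
  LinearMap.ker (nabla χ)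

/-- `μ_𝓔 := (μ_A ⊗ id_V) ∘ (μ_A ⊗ F) ∘ (id_A ⊗ χ ⊗ id_V)`. -/
def muE (χ : V ⊗[k] A →ₗ[k] A ⊗[k] V) (F : V ⊗[k] V →ₗ[k] A ⊗[k] V) :
    (A ⊗[k] V) ⊗[k] (A ⊗[k] V) →ₗ[k] A ⊗[k] V :=
  actMap ∘ₗ
  LinearMap.lTensor A (actMap) ∘ₗ
  LinearMap.lTensor A (LinearMap.lTensor A F ∘ₗ (TensorProduct.assoc k A V V).toLinearMap) ∘ₗ
  LinearMap.lTensor A (LinearMap.rTensor V χ) ∘ₗ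
  LinearMap.lTensor A (TensorProduct.assoc k V A V).symm.toLinearMap ∘ₗ
  (TensorProduct.assoc k A V (A ⊗[k] V)).toLinearMap

/-- The twisted module condition (stated on pure tensors). -/
def TwistedModuleCond (χ : V ⊗[k] A →ₗ[k] A ⊗[k] V) (F : V ⊗[k] V →ₗ[k] A ⊗[k] V) : Prop :=
  ∀ (v w : V) (a : A),
    ract χ a (F (v ⊗ₜ[k] w)) = muE χ F (((1 : A) ⊗ₜ[k] v) ⊗ₜ[k] χ (w ⊗ₜ[k] a))

/-- The cocycle condition (stated on pure tensors). -/
def CocycleCond (χ : V ⊗[k] A →ₗ[k] A ⊗[k] V) (F : V ⊗[k] V →ₗ[k] A ⊗[k] V) : Prop :=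
  ∀ (v w u : V),
    smulMap (F ∘ₗ (TensorProduct.mk k V V).flip u) (F (v ⊗ₜ[k] w)) =
      muE χ F (((1 : A) ⊗ₜ[k] v) ⊗ₜ[k] F (w ⊗ₜ[k] u))

/-- Preunit condition (i). -/
def Preunit1 (χ : V ⊗[k] A →ₗ[k] A ⊗[k] V) (F : V ⊗[k] V →ₗ[k] A ⊗[k] V)
    (ν : A ⊗[k] V) : Prop :=
  ∀ v : V, muE χ F (((1 : A) ⊗ₜ[k] v) ⊗ₜ[k] ν) = nabla χ ((1 : A) ⊗ₜ[k] v)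

/-- Preunit condition (ii). -/
def Preunit2 (χ : V ⊗[k] A →ₗ[k] A ⊗[k] V) (F : V ⊗[k] V →ₗ[k] A ⊗[k] V)
    (ν : A ⊗[k] V) : Prop :=
  ∀ v : V, smulMap (F ∘ₗ (TensorProduct.mk k V V).flip v) ν = nabla χ ((1 : A) ⊗ₜ[k] v)

/-- Preunit condition (iii). -/
def Preunit3 (χ : V ⊗[k] A →ₗ[k] A ⊗[k] V) (ν : A ⊗[k] V) : Prop :=
  ∀ a : A, ract χ a ν = a • ν

/-- `γ(v) := ∇_χ(1_A ⊗ v)`. -/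
def gammaMap (χ : V ⊗[k] A →ₗ[k] A ⊗[k] V) : V → A ⊗[k] V :=
  fun v => nabla χ ((1 : A) ⊗ₜ[k] v)

/-- `j'_ν(a) := a · ν(1)`. -/
def jnu' (ν : A ⊗[k] V) : A → A ⊗[k] V := fun a => a • ν

/-- `j_ν(a) := ∇_χ(j'_ν(a))`. -/
def jnu (χ : V ⊗[k] A →ₗ[k] A ⊗[k] V) (ν : A ⊗[k] V) : A → A ⊗[k] V :=
  fun a => nabla χ (a • ν)

/-- The image of `R ⊗ₖ V` in `A ⊗ₖ V`. -/
def RV (R : Subalgebra k A) : Submodule k (A ⊗[k] V) :=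
  LinearMap.range (LinearMap.rTensor V R.val.toLinearMap)

section Aux

variable (χ : V ⊗[k] A →ₗ[k] A ⊗[k] V) (F : V ⊗[k] V →ₗ[k] A ⊗[k] V)

lemma actMap_tmul (a : A) (x : A ⊗[k] V) : (actMap (a ⊗ₜ[k] x) : A ⊗[k] V) = a • x := rfl

lemma smulMap_tmul (g : V →ₗ[k] A ⊗[k] V) (a : A) (u : V) :
    smulMap g (a ⊗ₜ[k] u) = a • g u := rfl

lemma smulMap_smul (g : V →ₗ[k] A ⊗[k] V) (a : A) (x : A ⊗[k] V) :
    smulMap g (a • x) = a • smulMap g x := by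
  induction x using TensorProduct.induction_on with
  | zero => simp
  | tmul b u => rw [smul_tmul', smulMap_tmul, smulMap_tmul, smul_eq_mul, mul_smul]
  | add x y hx hy => rw [smul_add, map_add, hx, hy, map_add, smul_add]

lemma ract_tmul (a' a : A) (v : V) :
    ract χ a' (a ⊗ₜ[k] v) = a • χ (v ⊗ₜ[k] a') := rfl

lemma ract_smul (a' a : A) (x : A ⊗[k] V) :
    ract χ a' (a • x) = a • ract χ a' x := smulMap_smul _ a x

lemma nabla_tmul (a : A) (v : V) :
    nabla χ (a ⊗ₜ[k] v) = a • χ (v ⊗ₜ[k] (1 : A)) := rfl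

lemma nabla_smul (a : A) (x : A ⊗[k] V) :
    nabla χ (a • x) = a • nabla χ x := ract_smul χ 1 a x

lemma gamma_eq (v : V) : gammaMap χ v = χ (v ⊗ₜ[k] (1 : A)) := by
  rw [gammaMap, nabla_tmul, one_smul]

lemma nabla_idem (hχ : IsTwisting χ) (x : A ⊗[k] V) :
    nabla χ (nabla χ x) = nabla χ x := by
  induction x using TensorProduct.induction_on with
  | zero => simp
  | tmul a v =>
      rw [nabla_tmul, nabla_smul]
      congr 1
      have h := (hχ v 1 1).symm
      rw [one_mul] at h
      exact h
  | add x y hx hy => rw [map_add, map_add, hx, hy]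

lemma nabla_fix (hχ : IsTwisting χ) {x : A ⊗[k] V} (hx : x ∈ AxV χ) :
    nabla χ x = x := by
  obtain ⟨z, rfl⟩ := hx
  exact nabla_idem χ hχ z

lemma actMap_lTensor_assoc (w : V) (z : A ⊗[k] V) :
    actMap (LinearMap.lTensor A F ((TensorProduct.assoc k A V V) (z ⊗ₜ[k] w))) =
      smulMap (F ∘ₗ (TensorProduct.mk k V V).flip w) z := by
  induction z using TensorProduct.induction_on with
  | zero => simp
  | tmul c v' =>
      rw [assoc_tmul, LinearMap.lTensor_tmul, actMap_tmul, smulMap_tmul]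
      rfl
  | add x y hx hy => rw [add_tmul, map_add, map_add, map_add, hx, hy, map_add]

lemma muE_apply_right (c : A) (w : V) (x : A ⊗[k] V) :
    muE χ F (x ⊗ₜ[k] (c ⊗ₜ[k] w)) =
      smulMap (F ∘ₗ (TensorProduct.mk k V V).flip w) (ract χ c x) := by
  induction x using TensorProduct.induction_on with
  | zero => rw [zero_tmul, map_zero, map_zero, map_zero]
  | tmul a v =>
      rw [muE]
      simp only [LinearMap.comp_apply, LinearEquiv.coe_coe, assoc_tmul,
        LinearMap.lTensor_tmul, assoc_symm_tmul, LinearMap.rTensor_tmul, actMap_tmul]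
      rw [actMap_lTensor_assoc, ract_tmul, smulMap_smul]
  | add x y hx hy => rw [add_tmul, map_add, hx, hy, map_add, map_add]

lemma muE_smul_left (a : A) (x : A ⊗[k] V) (y : A ⊗[k] V) :
    muE χ F ((a • x) ⊗ₜ[k] y) = a • muE χ F (x ⊗ₜ[k] y) := by
  induction y using TensorProduct.induction_on with
  | zero => simp only [tmul_zero, map_zero, smul_zero]
  | tmul c w => rw [muE_apply_right, muE_apply_right, ract_smul, smulMap_smul]
  | add y z hy hz => rw [tmul_add, tmul_add, map_add, map_add, hy, hz, smul_add]

lemma ract_nabla (hχ : IsTwisting χ) (c : A) (x : A ⊗[k] V) :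
    ract χ c (nabla χ x) = ract χ c x := by
  induction x using TensorProduct.induction_on with
  | zero => simp
  | tmul a v =>
      rw [nabla_tmul, ract_smul, ract_tmul]
      congr 1
      have h := (hχ v 1 c).symm
      rw [one_mul] at h
      exact h
  | add x y hx hy => rw [map_add, map_add, hx, hy, map_add]

lemma muE_nabla_left (hχ : IsTwisting χ) (x y : A ⊗[k] V) :
    muE χ F (nabla χ x ⊗ₜ[k] y) = muE χ F (x ⊗ₜ[k] y) := by
  induction y using TensorProduct.induction_on with
  | zero => rw [tmul_zero, tmul_zero]
  | tmul c w => rw [muE_apply_right, muE_apply_right, ract_nabla χ hχ]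
  | add y z hy hz => rw [tmul_add, tmul_add, map_add, map_add, hy, hz]

lemma muE_gamma (hχ : IsTwisting χ) (htm : TwistedModuleCond χ F)
    (hF : ∀ x : V ⊗[k] V, F x ∈ AxV χ) (v : V) (x : A ⊗[k] V) :
    muE χ F (x ⊗ₜ[k] gammaMap χ v) =
      smulMap (F ∘ₗ (TensorProduct.mk k V V).flip v) x := by
  induction x using TensorProduct.induction_on with
  | zero => rw [zero_tmul, map_zero, map_zero]
  | tmul a u =>
      have h1 : (a : A) ⊗ₜ[k] u = a • ((1 : A) ⊗ₜ[k] u) := by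
        rw [smul_tmul', smul_eq_mul, mul_one]
      rw [h1, muE_smul_left, smulMap_smul]
      congr 1
      have h2 := htm u v 1
      rw [gamma_eq]
      rw [← h2]
      have h3 : ract χ 1 (F (u ⊗ₜ[k] v)) = F (u ⊗ₜ[k] v) := nabla_fix χ hχ (hF _)
      rw [h3, smulMap_tmul, one_smul, LinearMap.comp_apply]
      rfl
  | add x y hx hy => rw [add_tmul, map_add, hx, hy, map_add]

lemma gamma_mul (hχ : IsTwisting χ) (htm : TwistedModuleCond χ F)
    (hF : ∀ x : V ⊗[k] V, F x ∈ AxV χ) (v w : V) :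
    muE χ F (gammaMap χ v ⊗ₜ[k] gammaMap χ w) = F (v ⊗ₜ[k] w) := by
  have h1 : gammaMap χ v = nabla χ ((1 : A) ⊗ₜ[k] v) := rfl
  rw [h1, muE_nabla_left χ F hχ, muE_gamma χ F hχ htm hF, smulMap_tmul, one_smul,
    LinearMap.comp_apply]
  rfl

lemma jnu_gamma (ν : A ⊗[k] V) (hχ : IsTwisting χ) (htm : TwistedModuleCond χ F)
    (hF : ∀ x : V ⊗[k] V, F x ∈ AxV χ) (hν2 : Preunit2 χ F ν) (hν3 : Preunit3 χ ν)
    (r : A) (v : V) :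
    muE χ F (jnu χ ν r ⊗ₜ[k] gammaMap χ v) = nabla χ (r ⊗ₜ[k] v) := by
  have hjnu : jnu χ ν r = r • ν := by
    have hν : nabla χ ν = ν := by
      have := hν3 1
      rw [one_smul] at this
      exact this
    rw [jnu, nabla_smul, hν]
  rw [hjnu, muE_smul_left, muE_gamma χ F hχ htm hF, hν2 v, nabla_tmul, nabla_tmul, one_smul]

end Aux

theorem statement_17 (χ : V ⊗[k] A →ₗ[k] A ⊗[k] V) (F : V ⊗[k] V →ₗ[k] A ⊗[k] V)
    (ν : A ⊗[k] V)
    (hχ : IsTwisting χ) (hF : ∀ x : V ⊗[k] V, F x ∈ AxV χ)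
    (hν1 : Preunit1 χ F ν) (hν2 : Preunit2 χ F ν) (hν3 : Preunit3 χ ν)
    (htm : TwistedModuleCond χ F) (hcoc : CocycleCond χ F)
    (R : Subalgebra k A)
    (hFR : ∀ x : V ⊗[k] V, F x ∈ RV R) :
    (Submodule.span k
        {x : A ⊗[k] V | ∃ v w : V, x = muE χ F (gammaMap χ v ⊗ₜ[k] gammaMap χ w)} ≤
      RV R ⊓ AxV χ) ∧
    (RV R ⊓ AxV χ ≤
      Submodule.span k
        {x : A ⊗[k] V | ∃ r ∈ R, ∃ v : V, x = muE χ F (jnu χ ν r ⊗ₜ[k] gammaMap χ v)}) := by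
  constructor
  · rw [Submodule.span_le]
    rintro x ⟨v, w, rfl⟩
    rw [gamma_mul χ F hχ htm hF]
    exact ⟨hFR _, hF _⟩
  · rintro x ⟨⟨y, rfl⟩, hx2⟩
    rw [← nabla_fix χ hχ hx2]
    clear hx2
    induction y using TensorProduct.induction_on with
    | zero => simp only [map_zero]; exact Submodule.zero_mem _
    | tmul r v =>
        rw [LinearMap.rTensor_tmul]
        exact Submodule.subset_span
          ⟨(r : A), r.2, v, (jnu_gamma χ F ν hχ htm hF hν2 hν3 (r : A) v).symm⟩
    | add y z hy hz =>
        rw [map_add, map_add]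
        exact Submodule.add_mem _ hy hz

end WeakCrossedProduct
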